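/- arXiv:2409.12498 — 4 statements merged into one kernel-verified Lean document; each statement's English description precedes it below -/
import Mathlib

section
/- Let p be a design on N ≥ 2 units satisfying positivity, and write p_{ii'}(u,v) = Pr(W_i = u, W_{i'} = v) for i ≠ i' and u,v ∈ {0,1}. Define Ṽ = (1/N²)·( Σ_i Y_i(1)²/π_i + Σ_i Y_i(0)²/(1−π_i) + 2·Σ_{i<i'}[Y_i(1)·Y_{i'}(1)·(p_{ii'}(1,1)/(π_i·π_{i'}) − N/(N−1)) + Y_i(0)·Y_{i'}(0)·(p_{ii'}(0,0)/((1−π_i)·(1−π_{i'})) − N/(N−1))] − 2·Σ_{i<i'}[Y_i(1)·Y_{i'}(0)·(p_{ii'}(1,0)/(π_i·(1−π_{i'})) − N/(N−1)) + Y_i(0)·Y_{i'}(1)·(p_{ii'}(0,1)/((1−π_i)·π_{i'}) − N/(N−1))] ). Then Var(τ̂) = Ṽ − (1/(N(N−1)))·Σ_{i=1}^N (Y_i(1) − Y_i(0) − τ)². -/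
open Finset

noncomputable section

/-- Propensity score `π_i = Pr(W_i = 1)` of a design `p` on `N` units. -/
def piS (N : ℕ) (p : (Fin N → Bool) → ℝ) (i : Fin N) : ℝ :=
  ∑ w : Fin N → Bool, if w i then p w else 0

/-- Joint assignment probability `p_{ii'}(u,v) = Pr(W_i = u, W_{i'} = v)`. -/
def jointP (N : ℕ) (p : (Fin N → Bool) → ℝ) (i i' : Fin N) (u v : Bool) : ℝ :=
  ∑ w : Fin N → Bool, if w i = u ∧ w i' = v then p w else 0

/-- Expectation under the design. -/
def expct (N : ℕ) (p f : (Fin N → Bool) → ℝ) : ℝ :=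
  ∑ w : Fin N → Bool, p w * f w

/-- Average treatment effect. -/
def tauATE (N : ℕ) (Y1 Y0 : Fin N → ℝ) : ℝ :=
  (1 / (N : ℝ)) * ∑ i, (Y1 i - Y0 i)

/-- Horvitz–Thompson estimator. -/
def tauHT (N : ℕ) (p : (Fin N → Bool) → ℝ) (Y1 Y0 : Fin N → ℝ) (w : Fin N → Bool) : ℝ :=
  (1 / (N : ℝ)) * (∑ i, if w i then Y1 i / piS N p i else 0)
    - (1 / (N : ℝ)) * (∑ i, if w i then 0 else Y0 i / (1 - piS N p i))

/-- Design-based variance of the Horvitz–Thompson estimator. -/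
def varHT (N : ℕ) (p : (Fin N → Bool) → ℝ) (Y1 Y0 : Fin N → ℝ) : ℝ :=
  expct N p (fun w => (tauHT N p Y1 Y0 w - tauATE N Y1 Y0) ^ 2)

def Zf (N : ℕ) (p : (Fin N → Bool) → ℝ) (Y1 Y0 : Fin N → ℝ) (i : Fin N)
    (w : Fin N → Bool) : ℝ :=
  if w i then Y1 i / piS N p i else -(Y0 i / (1 - piS N p i))

def Sf (N : ℕ) (p : (Fin N → Bool) → ℝ) (Y1 Y0 : Fin N → ℝ) (i j : Fin N) : ℝ :=
  ∑ w : Fin N → Bool, p w * (Zf N p Y1 Y0 i w * Zf N p Y1 Y0 j w)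

lemma piS_compl {N : ℕ} {p : (Fin N → Bool) → ℝ}
    (hsum : ∑ w : Fin N → Bool, p w = 1) (i : Fin N) :
    (∑ w : Fin N → Bool, if w i then (0:ℝ) else p w) = 1 - piS N p i := by
  have h : piS N p i + (∑ w : Fin N → Bool, if w i then (0:ℝ) else p w)
      = ∑ w : Fin N → Bool, p w := by
    rw [piS, ← Finset.sum_add_distrib]
    exact Finset.sum_congr rfl fun w _ => by by_cases h : w i <;> simp [h]
  linarith

lemma jointP_diag_tt {N : ℕ} {p : (Fin N → Bool) → ℝ} (i : Fin N) :
    jointP N p i i true true = piS N p i := by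
  unfold jointP piS
  exact Finset.sum_congr rfl fun w _ => by by_cases h : w i <;> simp [h]

lemma jointP_diag_tf {N : ℕ} {p : (Fin N → Bool) → ℝ} (i : Fin N) :
    jointP N p i i true false = 0 := by
  unfold jointP
  exact Finset.sum_eq_zero fun w _ => by by_cases h : w i <;> simp [h]

lemma jointP_diag_ft {N : ℕ} {p : (Fin N → Bool) → ℝ} (i : Fin N) :
    jointP N p i i false true = 0 := by
  unfold jointP
  exact Finset.sum_eq_zero fun w _ => by by_cases h : w i <;> simp [h]

lemma jointP_diag_ff {N : ℕ} {p : (Fin N → Bool) → ℝ}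
    (hsum : ∑ w : Fin N → Bool, p w = 1) (i : Fin N) :
    jointP N p i i false false = 1 - piS N p i := by
  rw [← piS_compl hsum i]
  unfold jointP
  exact Finset.sum_congr rfl fun w _ => by by_cases h : w i <;> simp [h]

lemma jointP_symm {N : ℕ} (p : (Fin N → Bool) → ℝ) (i j : Fin N) (u v : Bool) :
    jointP N p i j u v = jointP N p j i v u := by
  unfold jointP
  exact Finset.sum_congr rfl fun w _ => if_congr and_comm rfl rfl

lemma Sf_eq {N : ℕ} (p : (Fin N → Bool) → ℝ) (Y1 Y0 : Fin N → ℝ) (i j : Fin N) :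
    Sf N p Y1 Y0 i j =
      jointP N p i j true true * (Y1 i / piS N p i * (Y1 j / piS N p j))
      - jointP N p i j true false * (Y1 i / piS N p i * (Y0 j / (1 - piS N p j)))
      - jointP N p i j false true * (Y0 i / (1 - piS N p i) * (Y1 j / piS N p j))
      + jointP N p i j false false * (Y0 i / (1 - piS N p i) * (Y0 j / (1 - piS N p j))) := by
  unfold Sf jointP
  simp only [Finset.sum_mul, ← Finset.sum_sub_distrib, ← Finset.sum_add_distrib]
  refine Finset.sum_congr rfl fun w _ => ?_
  unfold Zf
  by_cases hi : w i <;> by_cases hj : w j <;> simp [hi, hj] <;> ring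

lemma Zf_expect {N : ℕ} {p : (Fin N → Bool) → ℝ}
    (hsum : ∑ w : Fin N → Bool, p w = 1)
    (hpos : ∀ i, 0 < piS N p i ∧ piS N p i < 1)
    (Y1 Y0 : Fin N → ℝ) (i : Fin N) :
    ∑ w : Fin N → Bool, p w * Zf N p Y1 Y0 i w = Y1 i - Y0 i := by
  have hd : (∑ w : Fin N → Bool, if w i then p w else 0) = piS N p i := rfl
  have h1 : ∑ w : Fin N → Bool, p w * Zf N p Y1 Y0 i w
      = piS N p i * (Y1 i / piS N p i)
        - (1 - piS N p i) * (Y0 i / (1 - piS N p i)) := by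
    calc ∑ w : Fin N → Bool, p w * Zf N p Y1 Y0 i w
        = ∑ w : Fin N → Bool, ((if w i then p w else 0) * (Y1 i / piS N p i)
            - (if w i then (0:ℝ) else p w) * (Y0 i / (1 - piS N p i))) := by
          refine Finset.sum_congr rfl fun w _ => ?_
          unfold Zf
          by_cases h : w i <;> simp [h] <;> ring
      _ = piS N p i * (Y1 i / piS N p i)
            - (1 - piS N p i) * (Y0 i / (1 - piS N p i)) := by
          rw [Finset.sum_sub_distrib, ← Finset.sum_mul, ← Finset.sum_mul,
            piS_compl hsum i, hd]
  have hπ : piS N p i ≠ 0 := (hpos i).1.ne'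
  have hπ' : 1 - piS N p i ≠ 0 := by have := (hpos i).2; intro h; linarith [sub_eq_zero.mp h]
  rw [h1]
  field_simp

lemma two_sum_lt_eq_sum_ne {N : ℕ} (f : Fin N → Fin N → ℝ)
    (hf : ∀ i j, f i j = f j i) :
    2 * ∑ i : Fin N, ∑ j : Fin N, (if i < j then f i j else 0)
      = ∑ i : Fin N, ∑ j : Fin N, (if i ≠ j then f i j else 0) := by
  have h1 : ∑ i : Fin N, ∑ j : Fin N, (if i ≠ j then f i j else 0)
      = ∑ i : Fin N, ∑ j : Fin N,
          ((if i < j then f i j else 0) + (if j < i then f i j else 0)) := by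
    refine Finset.sum_congr rfl fun i _ => Finset.sum_congr rfl fun j _ => ?_
    rcases lt_trichotomy i j with h | h | h
    · simp [h, h.ne, not_lt_of_gt h]
    · simp [h, lt_irrefl]
    · simp [h, h.ne', not_lt_of_gt h]
  rw [h1]
  simp only [Finset.sum_add_distrib]
  have h2 : ∑ i : Fin N, ∑ j : Fin N, (if j < i then f i j else 0)
      = ∑ i : Fin N, ∑ j : Fin N, (if i < j then f i j else 0) := by
    rw [Finset.sum_comm]
    exact Finset.sum_congr rfl fun i _ => Finset.sum_congr rfl fun j _ => by rw [hf]
  rw [h2]; ring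

lemma pair_identity (a b c d e f g h ptt ptf pft pff cc : ℝ)
    (ha : a ≠ 0) (hb : b ≠ 0) (hc : c ≠ 0) (hd : d ≠ 0) :
    e * f * (ptt / (a * b) - cc) + g * h * (pff / (c * d) - cc)
      - (e * h * (ptf / (a * d) - cc) + g * f * (pft / (c * b) - cc))
    = (ptt * (e / a * (f / b)) - ptf * (e / a * (h / d)) - pft * (g / c * (f / b))
        + pff * (g / c * (h / d)))
      - cc * ((e - g) * (f - h)) := by
  field_simp
  ring

/-- Lemma A1 (extended Neymanian decomposition):
`Var(τ̂) = Ṽ − (1/(N(N−1)))·Σ_i (Y_i(1) − Y_i(0) − τ)²`. -/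
theorem neymanian_decomposition
    (N : ℕ) (hN : 2 ≤ N)
    (p : (Fin N → Bool) → ℝ) (hp : ∀ w, 0 ≤ p w)
    (hsum : ∑ w : Fin N → Bool, p w = 1)
    (hpos : ∀ i, 0 < piS N p i ∧ piS N p i < 1)
    (Y1 Y0 : Fin N → ℝ) :
    varHT N p Y1 Y0 =
      (1 / (N : ℝ) ^ 2) *
        ((∑ i, (Y1 i) ^ 2 / piS N p i) + (∑ i, (Y0 i) ^ 2 / (1 - piS N p i))
          + 2 * ∑ i, ∑ j, (if i < j then
              Y1 i * Y1 j *
                (jointP N p i j true true / (piS N p i * piS N p j) - (N : ℝ) / ((N : ℝ) - 1))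
              + Y0 i * Y0 j *
                (jointP N p i j false false / ((1 - piS N p i) * (1 - piS N p j))
                  - (N : ℝ) / ((N : ℝ) - 1))
            else 0)
          - 2 * ∑ i, ∑ j, (if i < j then
              Y1 i * Y0 j *
                (jointP N p i j true false / (piS N p i * (1 - piS N p j))
                  - (N : ℝ) / ((N : ℝ) - 1))
              + Y0 i * Y1 j *
                (jointP N p i j false true / ((1 - piS N p i) * piS N p j)
                  - (N : ℝ) / ((N : ℝ) - 1))
            else 0))
      - (1 / ((N : ℝ) * ((N : ℝ) - 1))) *
          ∑ i, (Y1 i - Y0 i - tauATE N Y1 Y0) ^ 2 := by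
  have hNR : (N : ℝ) ≠ 0 := by
    have : (2:ℝ) ≤ (N:ℝ) := by exact_mod_cast hN
    linarith
  have hN1 : (N : ℝ) - 1 ≠ 0 := by
    have : (2:ℝ) ≤ (N:ℝ) := by exact_mod_cast hN
    intro h; linarith
  have hπ : ∀ i, piS N p i ≠ 0 := fun i => (hpos i).1.ne'
  have hπ' : ∀ i, 1 - piS N p i ≠ 0 := fun i => by
    have := (hpos i).2; intro h; have := sub_eq_zero.mp h; linarith
  -- τ̂ in terms of Zf
  have hT : ∀ w, tauHT N p Y1 Y0 w = (1/(N:ℝ)) * ∑ i, Zf N p Y1 Y0 i w := by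
    intro w
    unfold tauHT
    rw [← mul_sub, ← Finset.sum_sub_distrib]
    congr 1
    refine Finset.sum_congr rfl fun i _ => ?_
    unfold Zf
    by_cases h : w i <;> simp [h]
  -- sum of potential-outcome differences
  have hd : ∑ i, (Y1 i - Y0 i) = (N:ℝ) * tauATE N Y1 Y0 := by
    unfold tauATE
    field_simp
  -- second moment sum
  have hA : ∑ w : Fin N → Bool,
      p w * ((∑ i, Zf N p Y1 Y0 i w) * (∑ i, Zf N p Y1 Y0 i w))
      = ∑ i, ∑ j, Sf N p Y1 Y0 i j := by
    have h0 : ∀ w, p w * ((∑ i, Zf N p Y1 Y0 i w) * (∑ i, Zf N p Y1 Y0 i w))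
        = ∑ i, ∑ j, p w * (Zf N p Y1 Y0 i w * Zf N p Y1 Y0 j w) := by
      intro w
      rw [Finset.sum_mul_sum]
      rw [Finset.mul_sum]
      exact Finset.sum_congr rfl fun i _ => by rw [Finset.mul_sum]
    simp only [h0]
    rw [Finset.sum_comm]
    exact Finset.sum_congr rfl fun i _ => Finset.sum_comm
  -- first moment sum
  have hB : ∑ w : Fin N → Bool, p w * (∑ i, Zf N p Y1 Y0 i w)
      = (N:ℝ) * tauATE N Y1 Y0 := by
    calc ∑ w : Fin N → Bool, p w * (∑ i, Zf N p Y1 Y0 i w)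
        = ∑ w : Fin N → Bool, ∑ i, p w * Zf N p Y1 Y0 i w := by
          exact Finset.sum_congr rfl fun w _ => by rw [Finset.mul_sum]
      _ = ∑ i, ∑ w : Fin N → Bool, p w * Zf N p Y1 Y0 i w := Finset.sum_comm
      _ = ∑ i, (Y1 i - Y0 i) :=
          Finset.sum_congr rfl fun i _ => Zf_expect hsum hpos Y1 Y0 i
      _ = (N:ℝ) * tauATE N Y1 Y0 := hd
  -- variance identity
  have hvar : varHT N p Y1 Y0
      = (1/(N:ℝ)^2) * (∑ i, ∑ j, Sf N p Y1 Y0 i j) - tauATE N Y1 Y0 ^ 2 := by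
    have expand : varHT N p Y1 Y0
        = (1/(N:ℝ)^2) * (∑ w : Fin N → Bool,
              p w * ((∑ i, Zf N p Y1 Y0 i w) * (∑ i, Zf N p Y1 Y0 i w)))
          - (2 * tauATE N Y1 Y0 / (N:ℝ)) *
              (∑ w : Fin N → Bool, p w * (∑ i, Zf N p Y1 Y0 i w))
          + tauATE N Y1 Y0 ^ 2 * (∑ w : Fin N → Bool, p w) := by
      unfold varHT expct
      calc ∑ w : Fin N → Bool, p w * (tauHT N p Y1 Y0 w - tauATE N Y1 Y0) ^ 2
          = ∑ w : Fin N → Bool,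
              ((1/(N:ℝ)^2) * (p w * ((∑ i, Zf N p Y1 Y0 i w) * (∑ i, Zf N p Y1 Y0 i w)))
                - (2 * tauATE N Y1 Y0 / (N:ℝ)) * (p w * (∑ i, Zf N p Y1 Y0 i w))
                + tauATE N Y1 Y0 ^ 2 * p w) := by
            refine Finset.sum_congr rfl fun w _ => ?_
            rw [hT w]
            ring
        _ = _ := by
            rw [Finset.sum_add_distrib, Finset.sum_sub_distrib, ← Finset.mul_sum,
              ← Finset.mul_sum, ← Finset.mul_sum]
    rw [expand, hA, hB, hsum]
    field_simp
    ring
  -- diagonal terms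
  have hdiag : ∀ i, Sf N p Y1 Y0 i i
      = Y1 i ^ 2 / piS N p i + Y0 i ^ 2 / (1 - piS N p i) := by
    intro i
    rw [Sf_eq, jointP_diag_tt, jointP_diag_tf, jointP_diag_ft, jointP_diag_ff hsum]
    field_simp [hπ i, hπ' i]
    ring
  have hdiagsum : ∑ i, Sf N p Y1 Y0 i i
      = (∑ i, (Y1 i) ^ 2 / piS N p i) + (∑ i, (Y0 i) ^ 2 / (1 - piS N p i)) := by
    rw [← Finset.sum_add_distrib]
    exact Finset.sum_congr rfl fun i _ => hdiag i
  -- symmetric off-diagonal sums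
  have hG1 : 2 * ∑ i, ∑ j, (if i < j then
              Y1 i * Y1 j *
                (jointP N p i j true true / (piS N p i * piS N p j) - (N : ℝ) / ((N : ℝ) - 1))
              + Y0 i * Y0 j *
                (jointP N p i j false false / ((1 - piS N p i) * (1 - piS N p j))
                  - (N : ℝ) / ((N : ℝ) - 1))
            else 0)
      = ∑ i, ∑ j, (if i ≠ j then
              Y1 i * Y1 j *
                (jointP N p i j true true / (piS N p i * piS N p j) - (N : ℝ) / ((N : ℝ) - 1))
              + Y0 i * Y0 j *
                (jointP N p i j false false / ((1 - piS N p i) * (1 - piS N p j))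
                  - (N : ℝ) / ((N : ℝ) - 1))
            else 0) := by
    refine two_sum_lt_eq_sum_ne _ fun i j => ?_
    rw [jointP_symm p i j true true, jointP_symm p i j false false]
    ring
  have hG2 : 2 * ∑ i, ∑ j, (if i < j then
              Y1 i * Y0 j *
                (jointP N p i j true false / (piS N p i * (1 - piS N p j))
                  - (N : ℝ) / ((N : ℝ) - 1))
              + Y0 i * Y1 j *
                (jointP N p i j false true / ((1 - piS N p i) * piS N p j)
                  - (N : ℝ) / ((N : ℝ) - 1))
            else 0)
      = ∑ i, ∑ j, (if i ≠ j then
              Y1 i * Y0 j *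
                (jointP N p i j true false / (piS N p i * (1 - piS N p j))
                  - (N : ℝ) / ((N : ℝ) - 1))
              + Y0 i * Y1 j *
                (jointP N p i j false true / ((1 - piS N p i) * piS N p j)
                  - (N : ℝ) / ((N : ℝ) - 1))
            else 0) := by
    refine two_sum_lt_eq_sum_ne _ fun i j => ?_
    rw [jointP_symm p i j true false, jointP_symm p i j false true]
    ring
  -- off-diagonal identity
  have hne : (∑ i, ∑ j, (if i ≠ j then
              Y1 i * Y1 j *
                (jointP N p i j true true / (piS N p i * piS N p j) - (N : ℝ) / ((N : ℝ) - 1))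
              + Y0 i * Y0 j *
                (jointP N p i j false false / ((1 - piS N p i) * (1 - piS N p j))
                  - (N : ℝ) / ((N : ℝ) - 1))
            else 0))
      - (∑ i, ∑ j, (if i ≠ j then
              Y1 i * Y0 j *
                (jointP N p i j true false / (piS N p i * (1 - piS N p j))
                  - (N : ℝ) / ((N : ℝ) - 1))
              + Y0 i * Y1 j *
                (jointP N p i j false true / ((1 - piS N p i) * piS N p j)
                  - (N : ℝ) / ((N : ℝ) - 1))
            else 0))
      = (∑ i, ∑ j, (if i ≠ j then Sf N p Y1 Y0 i j else 0))
        - ((N : ℝ) / ((N : ℝ) - 1)) *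
            ∑ i, ∑ j, (if i ≠ j then (Y1 i - Y0 i) * (Y1 j - Y0 j) else 0) := by
    simp only [Finset.mul_sum, ← Finset.sum_sub_distrib]
    refine Finset.sum_congr rfl fun i _ => Finset.sum_congr rfl fun j _ => ?_
    by_cases h : i = j
    · simp [h]
    · simp only [ne_eq, h, not_false_eq_true, if_true]
      rw [Sf_eq]
      exact pair_identity (piS N p i) (piS N p j) (1 - piS N p i) (1 - piS N p j)
        (Y1 i) (Y1 j) (Y0 i) (Y0 j) _ _ _ _ _ (hπ i) (hπ j) (hπ' i) (hπ' j)
  -- split full double sum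
  have hsplit : ∑ i, ∑ j, Sf N p Y1 Y0 i j
      = (∑ i, Sf N p Y1 Y0 i i) + ∑ i, ∑ j, (if i ≠ j then Sf N p Y1 Y0 i j else 0) := by
    rw [← Finset.sum_add_distrib]
    refine Finset.sum_congr rfl fun i _ => ?_
    have h0 : ∑ j, Sf N p Y1 Y0 i j
        = ∑ j, ((if i = j then Sf N p Y1 Y0 i j else 0)
            + (if i ≠ j then Sf N p Y1 Y0 i j else 0)) :=
      Finset.sum_congr rfl fun j _ => by by_cases h : i = j <;> simp [h]
    rw [h0, Finset.sum_add_distrib, Finset.sum_ite_eq]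
    simp
  -- off-diagonal d-products
  have hdsum : ∑ i, ∑ j, (if i ≠ j then (Y1 i - Y0 i) * (Y1 j - Y0 j) else 0)
      = (N:ℝ)^2 * tauATE N Y1 Y0 ^ 2 - ∑ i, (Y1 i - Y0 i)^2 := by
    have h0 : ∑ i, ∑ j, ((Y1 i - Y0 i) * (Y1 j - Y0 j))
        = (∑ i, (Y1 i - Y0 i)) * (∑ j, (Y1 j - Y0 j)) :=
      (Finset.sum_mul_sum _ _ _ _).symm
    have h1 : ∑ i, ∑ j, ((Y1 i - Y0 i) * (Y1 j - Y0 j))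
        = (∑ i, (Y1 i - Y0 i)^2)
          + ∑ i, ∑ j, (if i ≠ j then (Y1 i - Y0 i) * (Y1 j - Y0 j) else 0) := by
      rw [← Finset.sum_add_distrib]
      refine Finset.sum_congr rfl fun i _ => ?_
      have h2 : ∑ j, ((Y1 i - Y0 i) * (Y1 j - Y0 j))
          = ∑ j, ((if i = j then (Y1 i - Y0 i) * (Y1 j - Y0 j) else 0)
              + (if i ≠ j then (Y1 i - Y0 i) * (Y1 j - Y0 j) else 0)) :=
        Finset.sum_congr rfl fun j _ => by by_cases h : i = j <;> simp [h]
      rw [h2, Finset.sum_add_distrib, Finset.sum_ite_eq]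
      simp [sq]
    have h3 := h1.symm.trans h0
    rw [hd] at h3
    linear_combination h3
  -- expand the squared deviations
  have hsq : ∑ i, (Y1 i - Y0 i - tauATE N Y1 Y0) ^ 2
      = (∑ i, (Y1 i - Y0 i)^2) - 2 * tauATE N Y1 Y0 * ((N:ℝ) * tauATE N Y1 Y0)
        + (N:ℝ) * tauATE N Y1 Y0 ^ 2 := by
    have h0 : ∀ i, (Y1 i - Y0 i - tauATE N Y1 Y0) ^ 2
        = (Y1 i - Y0 i)^2 - 2 * tauATE N Y1 Y0 * (Y1 i - Y0 i) + tauATE N Y1 Y0 ^ 2 :=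
      fun i => by ring
    simp only [h0]
    rw [Finset.sum_add_distrib, Finset.sum_sub_distrib, ← Finset.mul_sum, hd,
      Finset.sum_const, Finset.card_univ, Fintype.card_fin, nsmul_eq_mul]
  -- bracket identity
  have hbracket : (∑ i, (Y1 i) ^ 2 / piS N p i) + (∑ i, (Y0 i) ^ 2 / (1 - piS N p i))
          + 2 * ∑ i, ∑ j, (if i < j then
              Y1 i * Y1 j *
                (jointP N p i j true true / (piS N p i * piS N p j) - (N : ℝ) / ((N : ℝ) - 1))
              + Y0 i * Y0 j *
                (jointP N p i j false false / ((1 - piS N p i) * (1 - piS N p j))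
                  - (N : ℝ) / ((N : ℝ) - 1))
            else 0)
          - 2 * ∑ i, ∑ j, (if i < j then
              Y1 i * Y0 j *
                (jointP N p i j true false / (piS N p i * (1 - piS N p j))
                  - (N : ℝ) / ((N : ℝ) - 1))
              + Y0 i * Y1 j *
                (jointP N p i j false true / ((1 - piS N p i) * piS N p j)
                  - (N : ℝ) / ((N : ℝ) - 1))
            else 0)
      = (∑ i, ∑ j, Sf N p Y1 Y0 i j)
        - ((N : ℝ) / ((N : ℝ) - 1)) *
            ((N:ℝ)^2 * tauATE N Y1 Y0 ^ 2 - ∑ i, (Y1 i - Y0 i)^2) := by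
    rw [hG1, hG2, ← hdsum]
    linear_combination hne - hsplit - hdiagsum
  rw [hvar, hbracket, hsq]
  field_simp
  ring
end
end

section
/- Let N = 4 and let p be the design with support 𝒲 = {(1,1,0,0), (0,0,1,1), (1,0,0,1), (0,1,1,0)}, each assignment having probability 1/4 (so π_i = 1/2 for all i). With the full substitute sets G*((1,1,0,0)) = G*((0,0,1,1)) = {(1,0,0,1),(0,1,1,0)} and G*((1,0,0,1)) = G*((0,1,1,0)) = {(1,1,0,0),(0,0,1,1)}, the contrast variance estimator satisfies, for every choice of potential outcomes, E[V̂_sub(W)] = Var(τ̂) + (Y(1) − Y(0))ᵀ·Q·(Y(1) − Y(0)), where Q = (1/16)·v·vᵀ with v = (1, −1, 1, −1)ᵀ; equivalently, E[V̂_sub(W)] = Var(τ̂) + (1/16)·((Y_1(1)−Y_1(0)) − (Y_2(1)−Y_2(0)) + (Y_3(1)−Y_3(0)) − (Y_4(1)−Y_4(0)))². In particular V̂_sub is the Neymanian decomposition-based estimator associated with this Q. -/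
open Finset
open scoped Classical

noncomputable section

/-- Observed outcome of unit `i` under assignment `w`. -/
def yObs (N : ℕ) (Y1 Y0 : Fin N → ℝ) (w : Fin N → Bool) (i : Fin N) : ℝ :=
  if w i then Y1 i else Y0 i

/-- `l_i(w) = 1` if treated, `−1` if control. -/
def ell (N : ℕ) (w : Fin N → Bool) (i : Fin N) : ℝ :=
  if w i then 1 else -1

/-- The HT (difference-in-means) estimator when `π_i = 1/2`. -/
def tauDM (N : ℕ) (Y1 Y0 : Fin N → ℝ) (w : Fin N → Bool) : ℝ :=
  (2 / (N : ℝ)) * ((∑ i, if w i then yObs N Y1 Y0 w i else 0)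
    - ∑ i, if w i then 0 else yObs N Y1 Y0 w i)

/-- Design-based variance of `τ̂`. -/
def varDM (N : ℕ) (p : (Fin N → Bool) → ℝ) (Y1 Y0 : Fin N → ℝ) : ℝ :=
  expct N p (fun w => (tauDM N Y1 Y0 w - tauATE N Y1 Y0) ^ 2)

/-- The contrast variance estimator. -/
def Vsub (N : ℕ) (p : (Fin N → Bool) → ℝ) (Y1 Y0 : Fin N → ℝ)
    (G : (Fin N → Bool) → Finset (Fin N → Bool)) (W : Fin N → Bool) : ℝ :=
  (4 / (N : ℝ) ^ 2) * ∑ w : Fin N → Bool,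
    if 0 < p w ∧ W ∈ G w then
      (p w / p W) * (1 / ((G w).card : ℝ)) * (∑ i, ell N w i * yObs N Y1 Y0 W i) ^ 2
    else 0

/-- The four assignment vectors of the toy design. -/
def wA : Fin 4 → Bool := ![true, true, false, false]
def wB : Fin 4 → Bool := ![false, false, true, true]
def wC : Fin 4 → Bool := ![true, false, false, true]
def wD : Fin 4 → Bool := ![false, true, true, false]

/-- The toy design: each of the four assignments has probability 1/4. -/
def pToy (w : Fin 4 → Bool) : ℝ :=
  if w = wA ∨ w = wB ∨ w = wC ∨ w = wD then 1 / 4 else 0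

/-- Full substitute sets for the toy design. -/
def GToy (w : Fin 4 → Bool) : Finset (Fin 4 → Bool) :=
  if w = wA ∨ w = wB then {wC, wD}
  else if w = wC ∨ w = wD then {wA, wB}
  else ∅

/-
Averaging `V̂_sub` over `W`, the weight `p_w / p_W` cancels against the probability `p_W` of
drawing `W` (substitutes lie in the support), so after swapping the two sums
`E[V̂_sub] = (4 / N²) · E_w [ mean over W ∈ G(w) of (l(w) · y(W))² ]`.
For the toy design both sides are then explicit quadratic forms in the eight potential
outcomes, and they differ by `(1/16) · (τ₁ − τ₂ + τ₃ − τ₄)²`.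
-/

theorem expct_Vsub {N : ℕ} {p : (Fin N → Bool) → ℝ} {G : (Fin N → Bool) → Finset (Fin N → Bool)}
    (hp : ∀ w, 0 ≤ p w) (hG : ∀ w, 0 < p w → ∀ W ∈ G w, p W ≠ 0) (Y1 Y0 : Fin N → ℝ) :
    expct N p (Vsub N p Y1 Y0 G) =
      expct N p (fun w => 4 / (N : ℝ) ^ 2 / (G w).card *
        ∑ W ∈ G w, (∑ i, ell N w i * yObs N Y1 Y0 W i) ^ 2) := by
  set c : (Fin N → Bool) → (Fin N → Bool) → ℝ :=
    fun w W => (∑ i, ell N w i * yObs N Y1 Y0 W i) ^ 2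
  have cancel : ∀ w W,
      p W * (if 0 < p w ∧ W ∈ G w then p w / p W * (1 / (G w).card) * c w W else 0)
        = if W ∈ G w then p w / (G w).card * c w W else 0 := by
    intro w W
    by_cases hW : W ∈ G w
    · rcases (hp w).lt_or_eq with hpos | hzero
      · simp only [hpos, hW, and_self, if_true]
        field_simp [hG w hpos W hW]
      · simp [← hzero]
    · simp [hW]
  calc ∑ W, p W * (4 / (N : ℝ) ^ 2 * ∑ w, if 0 < p w ∧ W ∈ G w then
          p w / p W * (1 / (G w).card) * c w W else 0)
      = ∑ W, ∑ w, 4 / (N : ℝ) ^ 2 * if W ∈ G w then p w / (G w).card * c w W else 0 := by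
        simp only [mul_sum, mul_left_comm (p _), cancel]
    _ = ∑ w, p w * (4 / (N : ℝ) ^ 2 / (G w).card * ∑ W ∈ G w, c w W) := by
        rw [sum_comm]
        refine sum_congr rfl fun w _ => ?_
        rw [← mul_sum, sum_ite_mem, univ_inter, ← mul_sum]
        ring

theorem expct_pToy (f : (Fin 4 → Bool) → ℝ) :
    expct 4 pToy f = (f wA + f wB + f wC + f wD) / 4 := by
  have hsupp : ∀ w, pToy w = if w ∈ ({wA, wB, wC, wD} : Finset _) then 1 / 4 else 0 := by
    simp [pToy]
  simp only [expct, hsupp, ite_mul, zero_mul, sum_ite_mem, univ_inter]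
  rw [sum_insert (by decide), sum_insert (by decide), sum_insert (by decide), sum_singleton]
  ring

theorem pToy_nonneg (w : Fin 4 → Bool) : 0 ≤ pToy w := by
  unfold pToy
  split_ifs <;> norm_num

theorem pToy_ne_zero_of_mem_GToy {w W : Fin 4 → Bool} (hW : W ∈ GToy w) : pToy W ≠ 0 := by
  unfold GToy at hW
  split_ifs at hW <;> simp at hW <;> rcases hW with rfl | rfl <;> simp [pToy]

theorem GToy_wA : GToy wA = {wC, wD} := by decide
theorem GToy_wB : GToy wB = {wC, wD} := by decide
theorem GToy_wC : GToy wC = {wA, wB} := by decide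
theorem GToy_wD : GToy wD = {wA, wB} := by decide

/-- Proposition 2: for the toy design, the contrast estimator with full substitute
sets is the Neymanian decomposition-based estimator with `Q = (1/16)·v·vᵀ`,
`v = (1,−1,1,−1)ᵀ`; i.e. its expectation equals
`Var(τ̂) + (1/16)·(τ₁ − τ₂ + τ₃ − τ₄)²` where `τ_i = Y_i(1) − Y_i(0)`. -/
theorem contrast_toy_design
    (Y1 Y0 : Fin 4 → ℝ) :
    expct 4 pToy (Vsub 4 pToy Y1 Y0 GToy) =
      varDM 4 pToy Y1 Y0 +
        (1 / 16) * ((Y1 0 - Y0 0) - (Y1 1 - Y0 1) + (Y1 2 - Y0 2) - (Y1 3 - Y0 3)) ^ 2 := by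
  rw [expct_Vsub pToy_nonneg (fun _ _ _ => pToy_ne_zero_of_mem_GToy), varDM,
    expct_pToy, expct_pToy, GToy_wA, GToy_wB, GToy_wC, GToy_wD,
    card_pair (by decide), card_pair (by decide)]
  simp only [Nat.cast_ofNat, ell, wA, yObs, wC, Fin.sum_univ_four, Fin.isValue,
    Matrix.cons_val_zero, ↓reduceIte, one_mul, Matrix.cons_val_one, Bool.false_eq_true,
    Matrix.cons_val, neg_mul, wD, wB, mul_ite, mem_singleton, Matrix.vecCons_inj,
    Bool.true_eq_false, and_true, and_self, not_false_eq_true, sum_insert, sum_singleton,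
    tauDM, add_zero, zero_add, tauATE, one_div, sum_sub_distrib]
  ring
end
end

section
/- Let p be a design on N units with π_i = 1/2 for all i. Then Var(τ̂) = ψ(c), where c = (c_1,…,c_N) with c_i = (Y_i(0) + Y_i(1))/2. Moreover, the function ψ : ℝ^N → ℝ is convex. -/
open Finset

noncomputable section

/-- `ψ(x) = Σ_w p_w·((2/N)·(Σ_{w_i=1} x_i − Σ_{w_i=0} x_i))²`. -/
def psiHalf (N : ℕ) (p : (Fin N → Bool) → ℝ) (x : Fin N → ℝ) : ℝ :=
  ∑ w : Fin N → Bool, p w *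
    ((2 / (N : ℝ)) * ((∑ i, if w i then x i else 0) - ∑ i, if w i then 0 else x i)) ^ 2

/-! A treated unit contributes `2Y_i(1) − (Y_i(1) − Y_i(0)) = 2c_i` to `N(τ̂(w) − τ)` and a control
unit `−2Y_i(0) − (Y_i(1) − Y_i(0)) = −2c_i`, so `τ̂(w) − τ` is the signed contrast of `c` for every
single assignment `w`; averaging its square gives `ψ(c)`. And `ψ` is a nonnegative combination of
squares of linear forms, hence convex. -/

theorem ConvexOn.sum {ι E : Type*} [AddCommMonoid E] [Module ℝ E] {s : Set E} (hs : Convex ℝ s)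
    (t : Finset ι) {f : ι → E → ℝ} (hf : ∀ i ∈ t, ConvexOn ℝ s (f i)) :
    ConvexOn ℝ s (fun x => ∑ i ∈ t, f i x) := by
  classical
  induction t using Finset.induction_on with
  | empty => simpa using convexOn_const 0 hs
  | insert a t ha ih =>
    simp only [Finset.sum_insert ha]
    exact (hf a (mem_insert_self a t)).add (ih fun i hi => hf i (mem_insert_of_mem hi))

theorem convexOn_sum_mul_sq_linearMap {ι E : Type*} [Fintype ι] [AddCommGroup E] [Module ℝ E]
    {p : ι → ℝ} (hp : ∀ i, 0 ≤ p i) (L : ι → E →ₗ[ℝ] ℝ) :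
    ConvexOn ℝ Set.univ (fun x => ∑ i, p i * L i x ^ 2) :=
  ConvexOn.sum convex_univ univ fun i _ =>
    ((even_two.convexOn_pow (𝕜 := ℝ)).comp_linearMap (L i)).smul (hp i)

def contrast (N : ℕ) (w : Fin N → Bool) : (Fin N → ℝ) →ₗ[ℝ] ℝ :=
  (2 / (N : ℝ)) • ∑ i, (if w i then 1 else -1 : ℝ) • LinearMap.proj i

theorem contrast_apply (N : ℕ) (w : Fin N → Bool) (x : Fin N → ℝ) :
    contrast N w x = (2 / (N : ℝ)) *
      ((∑ i, if w i then x i else 0) - ∑ i, if w i then 0 else x i) := by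
  simp only [contrast, LinearMap.smul_apply, LinearMap.sum_apply,
    LinearMap.proj_apply, smul_eq_mul, ← Finset.sum_sub_distrib]
  congr 1
  refine Finset.sum_congr rfl fun i _ => ?_
  split <;> ring

theorem psiHalf_eq_sum_contrast (N : ℕ) (p : (Fin N → Bool) → ℝ) :
    psiHalf N p = fun x => ∑ w, p w * contrast N w x ^ 2 := by
  funext x
  simp only [psiHalf, contrast_apply]

theorem tauDM_sub_tauATE (N : ℕ) (Y1 Y0 : Fin N → ℝ) (w : Fin N → Bool) :
    tauDM N Y1 Y0 w - tauATE N Y1 Y0 = contrast N w (fun i => (Y0 i + Y1 i) / 2) := by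
  rw [contrast_apply, tauDM, tauATE,
    show (1 / (N : ℝ)) * ∑ i, (Y1 i - Y0 i) = (2 / (N : ℝ)) * ∑ i, (Y1 i - Y0 i) / 2 by
      rw [← Finset.sum_div]; ring,
    ← mul_sub, ← Finset.sum_sub_distrib, ← Finset.sum_sub_distrib, ← Finset.sum_sub_distrib]
  congr 1
  refine Finset.sum_congr rfl fun i _ => ?_
  cases hw : w i <;> simp only [yObs, hw, ite_true, ite_false, Bool.false_eq_true] <;> ring

theorem variance_as_psi_and_convexity_general
    (N : ℕ) (p : (Fin N → Bool) → ℝ) (hp : ∀ w, 0 ≤ p w)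
    (Y1 Y0 : Fin N → ℝ) :
    varDM N p Y1 Y0 = psiHalf N p (fun i => (Y0 i + Y1 i) / 2) ∧
      ConvexOn ℝ Set.univ (psiHalf N p) := by
  rw [psiHalf_eq_sum_contrast]
  exact ⟨by simp only [varDM, expct, tauDM_sub_tauATE], convexOn_sum_mul_sq_linearMap hp _⟩

/-- Proposition 3: for a design with `π_i = 1/2` for all `i`, `Var(τ̂) = ψ(c)` with
`c_i = (Y_i(0) + Y_i(1))/2`, and `ψ` is convex. -/
theorem variance_as_psi_and_convexity
    (N : ℕ) (p : (Fin N → Bool) → ℝ) (hp : ∀ w, 0 ≤ p w)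
    (hsum : ∑ w : Fin N → Bool, p w = 1)
    (hpi : ∀ i, piS N p i = 1 / 2)
    (Y1 Y0 : Fin N → ℝ) :
    varDM N p Y1 Y0 = psiHalf N p (fun i => (Y0 i + Y1 i) / 2) ∧
      ConvexOn ℝ Set.univ (psiHalf N p) :=
  variance_as_psi_and_convexity_general N p hp Y1 Y0
end
end

section
/- Let N ≥ 4 be even and let p be the completely randomized design with equal group sizes. For an assignment W with Σ_i W_i = N/2, impute with β = τ̂(W), i.e., set ĉ_i(W) = y_i(W) + (1/2 − W_i)·τ̂(W). Then for every such W and every choice of potential outcomes, ψ(ĉ(W)) = ((N−2)/(N−1))·V̂_Neyman(W). -/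
/-! Under the balanced completely randomized design, counting how often a unit and a pair of
units fall into the treated half gives `ψ(x) = 4 / (N (N - 1)) · Σᵢ (xᵢ - x̄)²`.
Since `τ̂(W) = ȳ_t - ȳ_c`, imputing with `β = τ̂` shifts treated outcomes by `-τ̂/2` and control
outcomes by `+τ̂/2`, which moves both group means onto the overall mean `(ȳ_t + ȳ_c) / 2`.
Hence `Σᵢ (ĉᵢ - ĉ̄)²` is the pooled within-group sum of squares, and
`4 / (N (N - 1)) = (N - 2) / (N - 1) · 1 / ((N/2) (N/2 - 1))`. -/

open Finset

noncomputable section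

/-- The treated set `T(w)`. -/
def Tset (N : ℕ) (w : Fin N → Bool) : Finset (Fin N) :=
  univ.filter fun i => w i = true

/-- Completely randomized design with equal group sizes. -/
def crd (N : ℕ) (w : Fin N → Bool) : ℝ :=
  if (Tset N w).card = N / 2 then (1 : ℝ) / (N.choose (N / 2)) else 0

/-- Average observed outcome among treated units. -/
def ybarT (N : ℕ) (Y1 Y0 : Fin N → ℝ) (W : Fin N → Bool) : ℝ :=
  (∑ i ∈ Tset N W, yObs N Y1 Y0 W i) / ((Tset N W).card : ℝ)

/-- Average observed outcome among control units. -/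
def ybarC (N : ℕ) (Y1 Y0 : Fin N → ℝ) (W : Fin N → Bool) : ℝ :=
  (∑ i ∈ (Tset N W)ᶜ, yObs N Y1 Y0 W i) / (((Tset N W)ᶜ.card : ℝ))

/-- Neyman's variance estimator. -/
def VNeyman (N : ℕ) (Y1 Y0 : Fin N → ℝ) (W : Fin N → Bool) : ℝ :=
  (1 / (((N : ℝ) / 2) * ((N : ℝ) / 2 - 1))) *
    ((∑ i ∈ Tset N W, (yObs N Y1 Y0 W i - ybarT N Y1 Y0 W) ^ 2)
      + ∑ i ∈ (Tset N W)ᶜ, (yObs N Y1 Y0 W i - ybarC N Y1 Y0 W) ^ 2)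

namespace Finset

variable {α R : Type*} [DecidableEq α] [CommRing R]

theorem sq_sum_eq_sum_sum_ite_pair_subset {s u : Finset α} (h : s ⊆ u) (f : α → R) :
    (∑ i ∈ s, f i) ^ 2 = ∑ i ∈ u, ∑ j ∈ u, if {i, j} ⊆ s then f i * f j else 0 := by
  simp only [insert_subset_iff, singleton_subset_iff, ite_and]
  rw [sq, sum_mul_sum, ← sum_subset h (fun i _ hi => by simp [hi])]
  refine sum_congr rfl fun i hi => ?_
  simp only [hi, if_true, sum_ite_mem, inter_eq_right.2 h]

theorem card_filter_powersetCard_pair_subset {u : Finset α} {i j : α} (hi : i ∈ u) (hj : j ∈ u)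
    {k : ℕ} (hk : 2 ≤ k) :
    #{s ∈ u.powersetCard k | {i, j} ⊆ s} =
      if i = j then (#u - 1).choose (k - 1) else (#u - 2).choose (k - 2) := by
  have hsub : {i, j} ⊆ u := insert_subset hi (singleton_subset_iff.2 hj)
  rw [card_filter_powersetCard_subset _ _ _ hsub (card_le_two.trans hk)]
  split_ifs with hij
  · subst hij; simp
  · rw [card_pair hij]

theorem sum_sum_ite_eq_mul_sq (u : Finset α) (a b : R) (f : α → R) :
    ∑ i ∈ u, ∑ j ∈ u, (if i = j then a else b) * (f i * f j) =
      (a - b) * ∑ i ∈ u, f i ^ 2 + b * (∑ i ∈ u, f i) ^ 2 := by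
  have split (i j : α) : (if i = j then a else b) * (f i * f j) =
      b * (f i * f j) + if i = j then (a - b) * f i ^ 2 else 0 := by
    split_ifs with hij
    · subst hij; ring
    · ring
  simp only [split, sum_add_distrib, sum_ite_eq, sum_ite_mem, inter_self, ← mul_sum, sq,
    sum_mul_sum]
  ring

theorem sum_powersetCard_sq_sum (u : Finset α) {k : ℕ} (hk : 2 ≤ k) (f : α → R) :
    ∑ s ∈ u.powersetCard k, (∑ i ∈ s, f i) ^ 2 =
      (((#u - 1).choose (k - 1) : R) - (#u - 2).choose (k - 2)) * ∑ i ∈ u, f i ^ 2 +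
        ((#u - 2).choose (k - 2) : R) * (∑ i ∈ u, f i) ^ 2 := by
  rw [← sum_sum_ite_eq_mul_sq]
  calc ∑ s ∈ u.powersetCard k, (∑ i ∈ s, f i) ^ 2
      = ∑ i ∈ u, ∑ j ∈ u, ∑ s ∈ u.powersetCard k, if {i, j} ⊆ s then f i * f j else 0 := by
        rw [sum_congr rfl fun s hs =>
          sq_sum_eq_sum_sum_ite_pair_subset (mem_powersetCard.1 hs).1 f, sum_comm]
        exact sum_congr rfl fun i _ => sum_comm
    _ = _ := by
        refine sum_congr rfl fun i hi => sum_congr rfl fun j hj => ?_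
        rw [← sum_filter, sum_const, card_filter_powersetCard_pair_subset hi hj hk, nsmul_eq_mul]
        split_ifs <;> rfl

end Finset

theorem Nat.choose_sub_one_sub_choose_sub_two_mul {m : ℕ} (hm : 2 ≤ m) :
    (((2 * m - 1).choose (m - 1) : ℝ) - (2 * m - 2).choose (m - 2)) * (2 * (2 * m - 1)) =
      (2 * m).choose m * m := by
  have h1 := Nat.choose_mul (n := 2 * m) (k := m) (s := 1) (by omega)
  have h2 := Nat.choose_mul (n := 2 * m) (k := m) (s := 2) hm
  rw [Nat.choose_one_right, Nat.choose_one_right] at h1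
  have h1' : ((2 * m).choose m : ℝ) * m = 2 * m * (2 * m - 1).choose (m - 1) := by
    exact_mod_cast h1
  have h2' : ((2 * m).choose m : ℝ) * (m * (m - 1) / 2) =
      2 * m * (2 * m - 1) / 2 * (2 * m - 2).choose (m - 2) := by
    have := congrArg (Nat.cast (R := ℝ)) h2
    push_cast [Nat.cast_choose_two] at this
    exact this
  have hm0 : (m : ℝ) ≠ 0 := by positivity
  refine mul_left_cancel₀ hm0 ?_
  linear_combination (1 - 2 * (m : ℝ)) * h1' + 2 * h2'

theorem Tset_bijective (N : ℕ) : Function.Bijective (Tset N) := by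
  refine ⟨fun w w' h => funext fun i => ?_,
    fun s => ⟨fun i => decide (i ∈ s), by ext; simp [Tset]⟩⟩
  have := congrArg (i ∈ ·) h
  simp only [Tset, mem_filter, mem_univ, true_and, eq_iff_iff] at this
  cases hw : w i <;> cases hw' : w' i <;> simp_all

theorem sum_crd_mul (N : ℕ) (g : Finset (Fin N) → ℝ) :
    ∑ w, crd N w * g (Tset N w) =
      (∑ s ∈ (univ : Finset (Fin N)).powersetCard (N / 2), g s) / N.choose (N / 2) := by
  calc ∑ w, crd N w * g (Tset N w)
      = ∑ s : Finset (Fin N), if #s = N / 2 then g s / N.choose (N / 2) else 0 :=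
        Fintype.sum_bijective _ (Tset_bijective N) _ _ fun w => by
          simp only [crd]; split_ifs <;> ring
    _ = _ := by rw [← sum_filter, ← powerset_univ, ← powersetCard_eq_filter, sum_div]

theorem sum_ite_sub_sum_ite (N : ℕ) (w : Fin N → Bool) (x : Fin N → ℝ) :
    (∑ i, if w i then x i else 0) - (∑ i, if w i then 0 else x i) =
      2 * ∑ i ∈ Tset N w, x i - ∑ i, x i := by
  have h (i : Fin N) : (if w i then 0 else x i) = x i - if w i then x i else 0 := by
    split_ifs <;> ring
  simp only [h, sum_sub_distrib, Tset, sum_filter]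
  ring

theorem psiHalf_crd {m : ℕ} (hm : 2 ≤ m) (x : Fin (2 * m) → ℝ) :
    psiHalf (2 * m) (crd (2 * m)) x =
      4 / (2 * m * (2 * m - 1)) * ∑ i, (x i - (∑ j, x j) / (2 * m)) ^ 2 := by
  set c : Fin (2 * m) → ℝ := fun i => x i - (∑ j, x j) / (2 * m)
  have hm0 : (m : ℝ) ≠ 0 := by positivity
  have hc : ∑ i, c i = 0 := by
    simp only [c, sum_sub_distrib, sum_const, card_univ, Fintype.card_fin, nsmul_eq_mul]
    push_cast; field_simp; ring
  have hcenter : ∀ s ∈ (univ : Finset (Fin (2 * m))).powersetCard m,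
      2 * ∑ i ∈ s, x i - ∑ i, x i = 2 * ∑ i ∈ s, c i := by
    intro s hs
    simp only [c, sum_sub_distrib, sum_const, (mem_powersetCard.1 hs).2, nsmul_eq_mul]
    field_simp
  have hsq := sum_powersetCard_sq_sum (univ : Finset (Fin (2 * m))) hm c
  rw [hc, card_univ, Fintype.card_fin] at hsq
  have hC : ((2 * m).choose m : ℝ) ≠ 0 := by
    exact_mod_cast (Nat.choose_pos (by omega : m ≤ 2 * m)).ne'
  have h2m1 : (2 * m - 1 : ℝ) ≠ 0 := by
    have : (2 : ℝ) ≤ m := by exact_mod_cast hm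
    linarith
  have hratio := eq_div_of_mul_eq (mul_ne_zero two_ne_zero h2m1)
    (Nat.choose_sub_one_sub_choose_sub_two_mul hm)
  calc psiHalf (2 * m) (crd (2 * m)) x
      = (∑ s ∈ (univ : Finset (Fin (2 * m))).powersetCard m,
          ((2 / (2 * m : ℝ)) * (2 * ∑ i ∈ s, c i)) ^ 2) / (2 * m).choose m := by
        simp only [psiHalf, sum_ite_sub_sum_ite, sum_crd_mul (g := fun s =>
          ((2 / ((2 * m : ℕ) : ℝ)) * (2 * ∑ i ∈ s, x i - ∑ i, x i)) ^ 2),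
          Nat.mul_div_cancel_left m two_pos]
        push_cast
        rw [sum_congr rfl fun s hs => by rw [hcenter s hs]]
    _ = 4 / (2 * m * (2 * m - 1)) * ∑ i, c i ^ 2 := by
        simp only [mul_pow, ← mul_sum, hsq, hratio]
        field_simp
        ring

theorem sum_compl_Tset_eq {N : ℕ} (W : Fin N → Bool) (f : Fin N → ℝ) :
    ∑ i ∈ (Tset N W)ᶜ, f i = ∑ i, if W i then 0 else f i := by
  rw [Tset, compl_filter, sum_filter]
  exact sum_congr rfl fun i _ => by cases W i <;> simp

theorem sum_sq_sub_ite_eq {N : ℕ} (W : Fin N → Bool) (y : Fin N → ℝ) (a b : ℝ) :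
    ∑ i, (y i - if W i then a else b) ^ 2 =
      ∑ i ∈ Tset N W, (y i - a) ^ 2 + ∑ i ∈ (Tset N W)ᶜ, (y i - b) ^ 2 := by
  rw [Tset, sum_filter, ← Tset, sum_compl_Tset_eq, ← sum_add_distrib]
  exact sum_congr rfl fun i _ => by cases W i <;> simp

section Imputation

variable {m : ℕ} (Y1 Y0 : Fin (2 * m) → ℝ) {W : Fin (2 * m) → Bool}

theorem tauDM_eq_ybarT_sub_ybarC (hW : #(Tset (2 * m) W) = m) :
    tauDM (2 * m) Y1 Y0 W = ybarT (2 * m) Y1 Y0 W - ybarC (2 * m) Y1 Y0 W := by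
  have hC : #(Tset (2 * m) W)ᶜ = m := by rw [card_compl, Fintype.card_fin, hW]; omega
  rw [tauDM, ybarT, ybarC, hW, hC, Tset, sum_filter, ← Tset, sum_compl_Tset_eq]
  push_cast
  rw [div_mul_cancel_left₀ two_ne_zero]
  ring

theorem sum_yObs_div (hW : #(Tset (2 * m) W) = m) :
    (∑ i, yObs (2 * m) Y1 Y0 W i) / (2 * m) =
      (ybarT (2 * m) Y1 Y0 W + ybarC (2 * m) Y1 Y0 W) / 2 := by
  have hC : #(Tset (2 * m) W)ᶜ = m := by rw [card_compl, Fintype.card_fin, hW]; omega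
  rw [ybarT, ybarC, hW, hC, ← sum_add_sum_compl (Tset (2 * m) W)]
  ring

theorem sum_half_sub_indicator (hW : #(Tset (2 * m) W) = m) :
    ∑ i, (1 / 2 - if W i then (1 : ℝ) else 0) = 0 := by
  have hcount : ∑ i, (if W i then (1 : ℝ) else 0) = #(Tset (2 * m) W) := by rw [Tset, sum_boole]
  simp only [sum_sub_distrib, hcount, hW, sum_const, card_univ, Fintype.card_fin, nsmul_eq_mul]
  push_cast
  ring

theorem imputed_sub_mean (hW : #(Tset (2 * m) W) = m) (i : Fin (2 * m)) :
    yObs (2 * m) Y1 Y0 W i + (1 / 2 - (if W i then (1 : ℝ) else 0)) * tauDM (2 * m) Y1 Y0 W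
      - (∑ j, (yObs (2 * m) Y1 Y0 W j
          + (1 / 2 - (if W j then (1 : ℝ) else 0)) * tauDM (2 * m) Y1 Y0 W)) / (2 * m) =
      yObs (2 * m) Y1 Y0 W i - if W i then ybarT (2 * m) Y1 Y0 W else ybarC (2 * m) Y1 Y0 W := by
  rw [sum_add_distrib, ← sum_mul, sum_half_sub_indicator hW, zero_mul, add_zero,
    sum_yObs_div Y1 Y0 hW, tauDM_eq_ybarT_sub_ybarC Y1 Y0 hW]
  split_ifs <;> ring

end Imputation

/-- Proposition 6: under the CRD with equal group sizes, the imputation estimator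
with `β = τ̂(W)` satisfies `ψ(ĉ(W)) = ((N−2)/(N−1))·V̂_Neyman(W)`. -/
theorem imputation_tauhat_equals_scaled_neyman
    (N : ℕ) (hN : 4 ≤ N) (hEven : 2 ∣ N)
    (Y1 Y0 : Fin N → ℝ)
    (W : Fin N → Bool) (hW : (Tset N W).card = N / 2) :
    psiHalf N (crd N)
        (fun i => yObs N Y1 Y0 W i
          + (1 / 2 - (if W i then (1 : ℝ) else 0)) * tauDM N Y1 Y0 W)
      = (((N : ℝ) - 2) / ((N : ℝ) - 1)) * VNeyman N Y1 Y0 W := by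
  obtain ⟨m, rfl⟩ := hEven
  have hm : 2 ≤ m := by omega
  have hWm : #(Tset (2 * m) W) = m := by rw [hW]; omega
  rw [psiHalf_crd hm, sum_congr rfl fun i _ => by rw [imputed_sub_mean Y1 Y0 hWm i],
    sum_sq_sub_ite_eq, VNeyman]
  have hm' : (2 : ℝ) ≤ m := by exact_mod_cast hm
  have hm1 : (m : ℝ) - 1 ≠ 0 := by linarith
  have h2m1 : 2 * (m : ℝ) - 1 ≠ 0 := by linarith
  push_cast
  field_simp
  ring
end
end
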